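/- arXiv:2205.04413 — 2 statements merged into one kernel-verified Lean document; each statement's English description precedes it below -/
import Mathlib

section
/- Let n ≥ 2, d ≥ 2, and let f_{ij} ∈ C[x_0,...,x_n] (0 ≤ i < j ≤ n) be homogeneous of degree d. Then there exists a homogeneous polynomial f of degree d with f_{ij} = x_i ∂_j f - x_j ∂_i f for all i < j if and only if both x_i f_{jk} - x_j f_{ik} + x_k f_{ij} = 0 and ∂_i f_{jk} - ∂_j f_{ik} + ∂_k f_{ij} = 0 hold for all 0 ≤ i < j < k ≤ n. -/
/-!
Read `F` as the 2-form `Σ F_ij dx_i ∧ dx_j` and put `ω = Σ x_i dx_i`, so that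
`x_i ∂_j f - x_j ∂_i f` are the coefficients of `ω ∧ df`. The two families of equations say
`ω ∧ F = 0` and `dF = 0`; they hold for `F = ω ∧ df` because `ω ∧ ω = 0` and `dω = 0`.
Conversely, exactness of the Koszul complex of `x_0, …, x_n` in degree 2 gives `F = ω ∧ h` with
`h` homogeneous of degree `d - 1`, and `dF = -ω ∧ dh`, so `ω ∧ dh = 0`. By induction on the
degree, `ω ∧ dh = 0` forces `ω ∧ h = ω ∧ df`: Koszul again gives `dh = ω ∧ ζ`, then
`ω ∧ dζ = -d(dh) = 0`, the induction hypothesis gives `ω ∧ ζ = ω ∧ du = -d(u ω)`, so `h + u ω`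
is closed, hence by Euler's formula the gradient of some `f`, and
`ω ∧ h = ω ∧ (h + u ω) = ω ∧ df`. When `dh` is constant, Koszul forces it to vanish.
-/

section Upper

variable {ι M : Type*} [LinearOrder ι] [AddGroup M]

def skewOfUpper (F : ι → ι → M) (i j : ι) : M :=
  if i < j then F i j else if j < i then -F j i else 0

theorem skewOfUpper_of_lt (F : ι → ι → M) {i j : ι} (h : i < j) : skewOfUpper F i j = F i j :=
  if_pos h

theorem skewOfUpper_self (F : ι → ι → M) (i : ι) : skewOfUpper F i i = 0 := by
  simp [skewOfUpper]

theorem skewOfUpper_swap (F : ι → ι → M) (i j : ι) : skewOfUpper F j i = -skewOfUpper F i j := by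
  rcases lt_trichotomy i j with h | rfl | h
  · simp [skewOfUpper, h, h.not_gt]
  · simp [skewOfUpper]
  · simp [skewOfUpper, h, h.not_gt]

end Upper

namespace MvPolynomial

variable {σ R : Type*}

theorem pderiv_pderiv_comm [CommSemiring R] (i j : σ) (p : MvPolynomial σ R) :
    pderiv i (pderiv j p) = pderiv j (pderiv i p) := by
  rcases eq_or_ne i j with rfl | hij
  · rfl
  ext m
  simp only [coeff_pderiv, Finsupp.add_apply, Finsupp.single_eq_of_ne hij,
    Finsupp.single_eq_of_ne hij.symm, add_zero, add_right_comm m]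
  ring

theorem homogeneousComponent_succ_X_mul [CommSemiring R] (m : ℕ) (i : σ) (p : MvPolynomial σ R) :
    homogeneousComponent (m + 1) (X i * p) = X i * homogeneousComponent m p := by
  induction p using MvPolynomial.induction_on' with
  | monomial s a =>
    have hs : (X i * monomial s a : MvPolynomial σ R).IsHomogeneous (s.degree + 1) := by
      simpa [add_comm] using (isHomogeneous_X R i).mul (isHomogeneous_monomial a rfl)
    rw [homogeneousComponent_of_mem hs, homogeneousComponent_of_mem (isHomogeneous_monomial a rfl)]
    simp only [Nat.add_right_cancel_iff, mul_ite, mul_zero]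
  | add p q hp hq => simp only [mul_add, map_add, hp, hq]

theorem homogeneousComponent_zero_X_mul [CommSemiring R] (i : σ) (p : MvPolynomial σ R) :
    homogeneousComponent 0 (X i * p) = 0 := by
  simp [← constantCoeff_eq]

theorem X_dvd_sub_aeval_update_zero [CommRing R] [DecidableEq σ] (i : σ) (p : MvPolynomial σ R) :
    X i ∣ p - aeval (Function.update X i 0) p := by
  rw [← Ideal.mem_span_singleton, ← Ideal.Quotient.eq]
  suffices (Ideal.Quotient.mkₐ R (Ideal.span {X i})).comp (aeval (Function.update X i 0)) =
      Ideal.Quotient.mkₐ R _ from (AlgHom.congr_fun this p).symm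
  ext j
  rcases eq_or_ne j i with rfl | hji
  · simp
  · simp [hji]

section Forms

variable [CommRing R]

/- `h : σ → R[σ]` encodes the 1-form `Σ h_i dx_i` and `A : σ → σ → R[σ]` the 2-form
`Σ A_ij dx_i ∧ dx_j`; `xWedge` is the product with `ω = Σ x_i dx_i`, `extDeriv` is `d`. -/

noncomputable def xWedge₁ (h : σ → MvPolynomial σ R) (i j : σ) : MvPolynomial σ R :=
  X i * h j - X j * h i

noncomputable def xWedge₂ (A : σ → σ → MvPolynomial σ R) (i j k : σ) : MvPolynomial σ R :=
  X i * A j k - X j * A i k + X k * A i j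

noncomputable def extDeriv₁ (h : σ → MvPolynomial σ R) (i j : σ) : MvPolynomial σ R :=
  pderiv i (h j) - pderiv j (h i)

noncomputable def extDeriv₂ (A : σ → σ → MvPolynomial σ R) (i j k : σ) : MvPolynomial σ R :=
  pderiv i (A j k) - pderiv j (A i k) + pderiv k (A i j)

theorem xWedge₂_xWedge₁ (h : σ → MvPolynomial σ R) : xWedge₂ (xWedge₁ h) = 0 := by
  funext i j k
  simp only [xWedge₂, xWedge₁, Pi.zero_apply]
  ring

theorem extDeriv₁_pderiv (f : MvPolynomial σ R) : extDeriv₁ (fun i ↦ pderiv i f) = 0 := by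
  funext i j
  simp [extDeriv₁, pderiv_pderiv_comm i j]

theorem extDeriv₂_extDeriv₁ (h : σ → MvPolynomial σ R) : extDeriv₂ (extDeriv₁ h) = 0 := by
  funext i j k
  simp only [extDeriv₂, extDeriv₁, map_sub, pderiv_pderiv_comm i j, pderiv_pderiv_comm i k,
    pderiv_pderiv_comm j k, Pi.zero_apply]
  ring

theorem extDeriv₂_xWedge₁ (h : σ → MvPolynomial σ R) :
    extDeriv₂ (xWedge₁ h) = -xWedge₂ (extDeriv₁ h) := by
  classical
  funext i j k
  simp only [extDeriv₂, xWedge₁, xWedge₂, extDeriv₁, map_sub, pderiv_mul, pderiv_X,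
    Pi.neg_apply, Pi.single_comm j _ i, Pi.single_comm k _ i, Pi.single_comm k _ j]
  ring

theorem extDeriv₂_xWedge₁_pderiv (f : MvPolynomial σ R) :
    extDeriv₂ (xWedge₁ fun i ↦ pderiv i f) = 0 := by
  rw [extDeriv₂_xWedge₁, extDeriv₁_pderiv]
  funext i j k
  simp [xWedge₂]

theorem xWedge₁_add_mul_X (h : σ → MvPolynomial σ R) (u : MvPolynomial σ R) :
    xWedge₁ (fun i ↦ h i + u * X i) = xWedge₁ h := by
  funext i j
  simp only [xWedge₁]
  ring

theorem extDeriv₁_add_mul_X (h : σ → MvPolynomial σ R) (u : MvPolynomial σ R) :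
    extDeriv₁ (fun i ↦ h i + u * X i) = extDeriv₁ h - xWedge₁ (fun i ↦ pderiv i u) := by
  classical
  funext i j
  simp only [extDeriv₁, xWedge₁, map_add, pderiv_mul, pderiv_X, Pi.sub_apply,
    Pi.single_comm j _ i]
  ring

theorem xWedge₂_eq_zero_of_lt [LinearOrder σ] {A : σ → σ → MvPolynomial σ R}
    (hdiag : ∀ i, A i i = 0) (hanti : ∀ i j, A j i = -A i j)
    (hlt : ∀ i j k, i < j → j < k → xWedge₂ A i j k = 0) : xWedge₂ A = 0 := by
  have swap₁₂ : ∀ i j k, xWedge₂ A j i k = -xWedge₂ A i j k := by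
    intro i j k; simp only [xWedge₂, hanti j i]; ring
  have swap₂₃ : ∀ i j k, xWedge₂ A i k j = -xWedge₂ A i j k := by
    intro i j k; simp only [xWedge₂, hanti k j]; ring
  have diag₁₂ : ∀ i k, xWedge₂ A i i k = 0 := by
    intro i k; simp only [xWedge₂, hdiag]; ring
  have diag₂₃ : ∀ i j, xWedge₂ A i j j = 0 := by
    intro i j; simp only [xWedge₂, hdiag]; ring
  have of_lt : ∀ i j k, i < j → xWedge₂ A i j k = 0 := by
    intro i j k hij
    rcases lt_trichotomy j k with hjk | rfl | hkj
    · exact hlt i j k hij hjk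
    · exact diag₂₃ i j
    rcases lt_trichotomy i k with hik | rfl | hki
    · rw [← neg_eq_zero, ← swap₂₃, hlt i k j hik hkj]
    · rw [← neg_eq_zero, ← swap₂₃, diag₁₂]
    · rw [← neg_eq_zero, ← swap₂₃, ← neg_eq_zero, ← swap₁₂, hlt k i j hki hij]
  funext i j k
  show xWedge₂ A i j k = 0
  rcases lt_trichotomy i j with hij | rfl | hji
  · exact of_lt i j k hij
  · exact diag₁₂ i k
  · rw [← neg_eq_zero, ← swap₁₂, of_lt j i k hji]

end Forms

section Koszul

variable [CommRing R] [IsDomain R] [Fintype σ]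

theorem exists_xWedge₁_eq_of_xWedge₂_eq_zero (hσ : 2 < Fintype.card σ)
    {A : σ → σ → MvPolynomial σ R} (hA : xWedge₂ A = 0) : ∃ h, xWedge₁ h = A := by
  classical
  obtain ⟨z, o, t, hzo, hzt, hot⟩ := Fintype.two_lt_card_iff.mp hσ
  have hpl : ∀ i j k, X i * A j k - X j * A i k + X k * A i j = 0 :=
    fun i j k ↦ congr_fun₃ hA i j k
  have hAzz : A z z = 0 :=
    (mul_eq_zero.mp (by linear_combination hpl z z z)).resolve_left (X_ne_zero z)
  have hrow : ∀ j k, X z * A j k = X j * A z k - X k * A z j := fun j k ↦ by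
    linear_combination hpl z j k
  -- Modulo `x_z`, `hrow` says the `A z k` (`k ≠ z`) are the multiples `x_k G` of one `G`.
  set φ := aeval (R := R) (Function.update X z (0 : MvPolynomial σ R))
  have hφ : ∀ j k, j ≠ z → k ≠ z → X j * φ (A z k) = X k * φ (A z j) := by
    intro j k hj hk
    have := congrArg φ (hrow j k)
    simp only [φ, map_mul, map_sub, aeval_X, Function.update_self, Function.update_of_ne hj,
      Function.update_of_ne hk, zero_mul] at this
    linear_combination -this
  obtain ⟨G, hG⟩ : X o ∣ φ (A z o) := by
    refine (X_prime.dvd_or_dvd ⟨φ (A z t), hφ t o hzt.symm hzo.symm⟩).resolve_left ?_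
    rw [X_dvd_X]
    exact hot
  have hφA : ∀ k, k ≠ z → φ (A z k) = X k * G := fun k hk ↦ by
    rw [← X_mul_cancel_left_iff (i := o), hφ o k hzo.symm hk, hG]
    ring
  choose H hH using fun k ↦ X_dvd_sub_aeval_update_zero z (A z k)
  have hcol : ∀ k, A z k = xWedge₁ (Function.update H z (-G)) z k := by
    intro k
    rcases eq_or_ne k z with rfl | hk
    · simp [xWedge₁, hAzz]
    · simp only [xWedge₁, Function.update_self, Function.update_of_ne hk]
      linear_combination hH k + hφA k hk
  refine ⟨Function.update H z (-G), funext₂ fun i j ↦ ?_⟩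
  rw [← X_mul_cancel_left_iff (i := z), hrow, hcol, hcol]
  simp only [xWedge₁]
  ring

theorem exists_isHomogeneous_xWedge₁_eq (hσ : 2 < Fintype.card σ) {m : ℕ}
    {A : σ → σ → MvPolynomial σ R} (hAm : ∀ i j, (A i j).IsHomogeneous (m + 1))
    (hA : xWedge₂ A = 0) :
    ∃ h : σ → MvPolynomial σ R, (∀ i, (h i).IsHomogeneous m) ∧ xWedge₁ h = A := by
  obtain ⟨h, rfl⟩ := exists_xWedge₁_eq_of_xWedge₂_eq_zero hσ hA
  refine ⟨fun i ↦ homogeneousComponent m (h i), fun i ↦ homogeneousComponent_isHomogeneous m _,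
    funext₂ fun i j ↦ ?_⟩
  rw [← homogeneousComponent_eq_self (hAm i j)]
  simp only [xWedge₁, map_sub, homogeneousComponent_succ_X_mul]

theorem eq_zero_of_isHomogeneous_zero_of_xWedge₂_eq_zero (hσ : 2 < Fintype.card σ)
    {A : σ → σ → MvPolynomial σ R} (hA0 : ∀ i j, (A i j).IsHomogeneous 0)
    (hA : xWedge₂ A = 0) : A = 0 := by
  obtain ⟨h, rfl⟩ := exists_xWedge₁_eq_of_xWedge₂_eq_zero hσ hA
  refine funext₂ fun i j ↦ ?_
  rw [← homogeneousComponent_eq_self (hA0 i j)]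
  simp only [xWedge₁, map_sub, homogeneousComponent_zero_X_mul, sub_self, Pi.zero_apply]

end Koszul


theorem exists_isHomogeneous_xWedge₁_eq_of_lt [CommRing R] [IsDomain R] [Fintype σ] [LinearOrder σ]
    (hσ : 2 < Fintype.card σ) {m : ℕ} {F : σ → σ → MvPolynomial σ R}
    (hFm : ∀ i j, i < j → (F i j).IsHomogeneous (m + 1))
    (hF : ∀ i j k, i < j → j < k → xWedge₂ F i j k = 0) :
    ∃ h : σ → MvPolynomial σ R, (∀ i, (h i).IsHomogeneous m) ∧
      ∀ i j, i < j → F i j = xWedge₁ h i j := by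
  have hAm : ∀ i j, (skewOfUpper F i j).IsHomogeneous (m + 1) := by
    intro i j
    unfold skewOfUpper
    split_ifs with hij hji
    exacts [hFm i j hij, (hFm j i hji).neg, isHomogeneous_zero _ _ _]
  have hA : xWedge₂ (skewOfUpper F) = 0 :=
    xWedge₂_eq_zero_of_lt (skewOfUpper_self F) (skewOfUpper_swap F) fun i j k hij hjk ↦ by
      simpa only [xWedge₂, skewOfUpper_of_lt F hij, skewOfUpper_of_lt F hjk,
        skewOfUpper_of_lt F (hij.trans hjk)] using hF i j k hij hjk
  obtain ⟨h, hh, hhA⟩ := exists_isHomogeneous_xWedge₁_eq hσ hAm hA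
  exact ⟨h, hh, fun i j hij ↦ by rw [hhA, skewOfUpper_of_lt F hij]⟩

section Field

variable {K : Type*} [Field K] [CharZero K] [Fintype σ]

theorem exists_pderiv_eq_of_extDeriv₁_eq_zero {δ : ℕ} {h : σ → MvPolynomial σ K}
    (hh : ∀ i, (h i).IsHomogeneous δ) (hdh : extDeriv₁ h = 0) :
    ∃ f : MvPolynomial σ K, f.IsHomogeneous (δ + 1) ∧ ∀ i, pderiv i f = h i := by
  classical
  refine ⟨C (δ + 1 : K)⁻¹ * ∑ i, X i * h i, ?_, fun j ↦ ?_⟩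
  · refine IsHomogeneous.C_mul (IsHomogeneous.sum _ _ _ fun i _ ↦ ?_) _
    simpa [add_comm] using (isHomogeneous_X K i).mul (hh i)
  have hsymm : ∀ i, pderiv j (h i) = pderiv i (h j) := fun i ↦
    sub_eq_zero.mp (congr_fun₂ hdh j i)
  have hsum : pderiv j (∑ i, X i * h i) = (δ + 1 : K) • h j := by
    simp only [map_sum, pderiv_mul, pderiv_X, Finset.sum_add_distrib, hsymm,
      (hh j).sum_X_mul_pderiv, Pi.single_apply, ite_mul, one_mul, zero_mul,
      Finset.sum_ite_eq', Finset.mem_univ, if_true]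
    rw [add_smul, one_smul, Nat.cast_smul_eq_nsmul, add_comm]
  rw [pderiv_C_mul, hsum, ← smul_eq_C_mul, smul_smul,
    inv_mul_cancel₀ (Nat.cast_add_one_ne_zero δ), one_smul]

theorem exists_xWedge₁_pderiv_eq (hσ : 2 < Fintype.card σ) {δ : ℕ} {h : σ → MvPolynomial σ K}
    (hh : ∀ i, (h i).IsHomogeneous δ) (hdh : xWedge₂ (extDeriv₁ h) = 0) :
    ∃ f : MvPolynomial σ K, f.IsHomogeneous (δ + 1) ∧
      xWedge₁ (fun i ↦ pderiv i f) = xWedge₁ h := by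
  induction δ using Nat.strong_induction_on generalizing h with
  | _ δ ih =>
  have hdh_hom : ∀ i j, (extDeriv₁ h i j).IsHomogeneous (δ - 1) :=
    fun i j ↦ (hh j).pderiv.sub (hh i).pderiv
  obtain hδ | ⟨e, rfl⟩ : δ - 1 = 0 ∨ ∃ e, δ = e + 2 := by
    rcases δ with _ | _ | e <;> simp
  · obtain ⟨f, hf, hfh⟩ := exists_pderiv_eq_of_extDeriv₁_eq_zero hh
      (eq_zero_of_isHomogeneous_zero_of_xWedge₂_eq_zero hσ (hδ ▸ hdh_hom) hdh)
    exact ⟨f, hf, by simp only [hfh]⟩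
  obtain ⟨ζ, hζ, hζh⟩ := exists_isHomogeneous_xWedge₁_eq hσ hdh_hom hdh
  have hdζ : xWedge₂ (extDeriv₁ ζ) = 0 := by
    rw [← neg_eq_zero, ← extDeriv₂_xWedge₁, hζh, extDeriv₂_extDeriv₁]
  obtain ⟨u, hu, hux⟩ := ih e (by omega) hζ hdζ
  obtain ⟨f, hf, hfh⟩ := exists_pderiv_eq_of_extDeriv₁_eq_zero
    (fun i ↦ (hh i).add (hu.mul (isHomogeneous_X K i)))
    (by rw [extDeriv₁_add_mul_X, ← hζh, hux, sub_self])
  exact ⟨f, hf, by simp only [hfh, xWedge₁_add_mul_X]⟩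

end Field

end MvPolynomial

open MvPolynomial

theorem equations_symmetric (n d : ℕ) (hn : 2 ≤ n) (hd : 2 ≤ d)
    (F : Fin (n + 1) → Fin (n + 1) → MvPolynomial (Fin (n + 1)) ℂ)
    (hFhom : ∀ i j : Fin (n + 1), i < j → (F i j).IsHomogeneous d) :
    (∃ f : MvPolynomial (Fin (n + 1)) ℂ, f.IsHomogeneous d ∧
      ∀ i j : Fin (n + 1), i < j → F i j = X i * pderiv j f - X j * pderiv i f) ↔
    ((∀ i j k : Fin (n + 1), i < j → j < k →
        X i * F j k - X j * F i k + X k * F i j = 0) ∧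
     (∀ i j k : Fin (n + 1), i < j → j < k →
        pderiv i (F j k) - pderiv j (F i k) + pderiv k (F i j) = 0)) := by
  have hσ : 2 < Fintype.card (Fin (n + 1)) := by rw [Fintype.card_fin]; omega
  constructor
  · rintro ⟨f, -, hF⟩
    refine ⟨fun i j k hij hjk ↦ ?_, fun i j k hij hjk ↦ ?_⟩ <;>
      rw [hF j k hjk, hF i k (hij.trans hjk), hF i j hij]
    · exact congr_fun₃ (xWedge₂_xWedge₁ fun i ↦ pderiv i f) i j k
    · exact congr_fun₃ (extDeriv₂_xWedge₁_pderiv f) i j k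
  · rintro ⟨hwedge, hderiv⟩
    obtain ⟨D, rfl⟩ : ∃ D, d = D + 1 := ⟨d - 1, by omega⟩
    obtain ⟨h, hh, hFh⟩ := exists_isHomogeneous_xWedge₁_eq_of_lt hσ hFhom hwedge
    have hdh : xWedge₂ (extDeriv₁ h) = 0 :=
      xWedge₂_eq_zero_of_lt (fun i ↦ sub_self _) (fun i j ↦ (neg_sub _ _).symm)
        fun i j k hij hjk ↦ by
          have := hderiv i j k hij hjk
          rw [hFh j k hjk, hFh i k (hij.trans hjk), hFh i j hij] at this
          exact neg_eq_zero.mp ((congr_fun₃ (extDeriv₂_xWedge₁ h) i j k).symm.trans this)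
    obtain ⟨f, hf, hfh⟩ := exists_xWedge₁_pderiv_eq hσ hh hdh
    exact ⟨f, hf, fun i j hij ↦ by rw [hFh i j hij, ← hfh]; rfl⟩
end

section
/- Let n ≥ 2, d ≥ 2, and let g_0,...,g_n ∈ C[x_0,...,x_n] be homogeneous of degree d-1 such that the scheme of common zeros of the f_{ij} = x_i g_j - x_j g_i is finite. Then no d+1 distinct points of this zero locus are collinear in P^n. -/
/-!
On a projective line `L = ℙ(span {v, w})` every minor `x_i g_j - x_j g_i` restricts to a binary
form of degree `d`. If `d + 1` points of the eigenscheme lay on `L`, each restriction would have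
`d + 1` distinct zeros and hence vanish identically, so all of `L` would lie in the eigenscheme,
contradicting finiteness. To count zeros we choose the basis so that the given points all lie in
the affine chart `s ↦ [v + s • w]`, where the restrictions are polynomials in `s` of degree `≤ d`.
-/

open MvPolynomial

namespace MvPolynomial

variable {σ R : Type*} [CommSemiring R]

theorem IsHomogeneous.eval_smul {f : MvPolynomial σ R} {m : ℕ} (hf : f.IsHomogeneous m)
    (c : R) (x : σ → R) : eval (c • x) f = c ^ m * eval x f := by
  rw [eval_eq, eval_eq, Finset.mul_sum]
  refine Finset.sum_congr rfl fun u hu => ?_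
  have hdeg : ∑ i ∈ u.support, u i = m := by
    rw [← Finsupp.degree_apply, Finsupp.degree_eq_weight_one]
    exact hf (mem_support_iff.mp hu)
  simp only [Pi.smul_apply, smul_eq_mul, mul_pow, Finset.prod_mul_distrib,
    Finset.prod_pow_eq_pow_sum, hdeg]
  ring

theorem natDegree_aeval_le_totalDegree (f : MvPolynomial σ R) {φ : σ → Polynomial R}
    (hφ : ∀ i, (φ i).natDegree ≤ 1) : (aeval φ f).natDegree ≤ f.totalDegree := by
  conv_lhs => rw [f.as_sum, map_sum]
  refine Polynomial.natDegree_sum_le_of_forall_le _ _ fun u hu => ?_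
  rw [aeval_monomial, ← Polynomial.C_eq_algebraMap]
  calc _ ≤ (u.prod fun i k => φ i ^ k).natDegree := Polynomial.natDegree_C_mul_le _ _
    _ ≤ ∑ i ∈ u.support, (φ i ^ u i).natDegree := Polynomial.natDegree_prod_le _ _
    _ ≤ ∑ i ∈ u.support, u i := Finset.sum_le_sum fun i _ =>
        (Polynomial.natDegree_pow_le_of_le _ (hφ i)).trans_eq (mul_one _)
    _ ≤ f.totalDegree := le_totalDegree hu

noncomputable def restrictLine (f : MvPolynomial σ R) (v w : σ → R) : Polynomial R :=
  aeval (fun i => Polynomial.C (w i) * Polynomial.X + Polynomial.C (v i)) f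

theorem eval_restrictLine (f : MvPolynomial σ R) (v w : σ → R) (s : R) :
    (f.restrictLine v w).eval s = eval (v + s • w) f := by
  induction f using MvPolynomial.induction_on with
  | C a => simp [restrictLine]
  | add p q hp hq => simp_all [restrictLine]
  | mul_X p i hp =>
    simp only [restrictLine] at hp ⊢
    simp only [map_mul, aeval_X, Polynomial.eval_mul, hp, Polynomial.eval_add,
      Polynomial.eval_C, Polynomial.eval_X, eval_X, Pi.add_apply, Pi.smul_apply, smul_eq_mul]
    ring

theorem natDegree_restrictLine_le (f : MvPolynomial σ R) (v w : σ → R) :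
    (f.restrictLine v w).natDegree ≤ f.totalDegree :=
  f.natDegree_aeval_le_totalDegree fun _ => Polynomial.natDegree_linear_le

end MvPolynomial

open scoped LinearAlgebra.Projectivization

section ProjectiveLine

variable {K V : Type*} [Field K] [AddCommGroup V] [Module K V] {v w : V}

theorem LinearIndependent.add_smul_ne_zero (h : LinearIndependent K ![v, w]) (s : K) :
    v + s • w ≠ 0 := by
  intro hvw
  simpa using (LinearIndependent.pair_iff.mp h 1 s (by simpa using hvw)).1

def lineChart (h : LinearIndependent K ![v, w]) (s : K) : ℙ K V :=
  Projectivization.mk K (v + s • w) (h.add_smul_ne_zero s)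

theorem lineChart_injective (h : LinearIndependent K ![v, w]) :
    Function.Injective (lineChart h) := by
  intro s t hst
  obtain ⟨a, ha⟩ := (Projectivization.mk_eq_mk_iff' K (v + s • w) (v + t • w) _ _).mp hst
  have hcoef := LinearIndependent.pair_iff.mp h (a - 1) (a * t - s) (by
    rw [← sub_eq_zero.mpr ha]; module)
  have ha1 : a = 1 := sub_eq_zero.mp hcoef.1
  simpa [ha1, sub_eq_zero, eq_comm] using hcoef.2

theorem mem_range_lineChart (h : LinearIndependent K ![v, w]) {p : ℙ K V}
    (hp : p.rep ∈ Submodule.span K {v, w})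
    (hpw : ∀ a : K, a • w ≠ p.rep) : p ∈ Set.range (lineChart h) := by
  obtain ⟨a, b, hab⟩ := Submodule.mem_span_pair.mp hp
  have ha : a ≠ 0 := by
    rintro rfl
    exact hpw b (by simpa using hab)
  refine ⟨b / a, ?_⟩
  rw [lineChart, ← p.mk_rep, Projectivization.mk_eq_mk_iff']
  refine ⟨a⁻¹, ?_⟩
  rw [← hab]
  match_scalars <;> field_simp

theorem LinearIndependent.pair_swap_add_smul (h : LinearIndependent K ![v, w]) (c : K) :
    LinearIndependent K ![w, v + c • w] := by
  refine LinearIndependent.pair_iff.mpr fun s t hst => ?_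
  have hcoef := LinearIndependent.pair_iff.mp h t (s + t * c) (by rw [← hst]; module)
  have ht : t = 0 := hcoef.1
  simpa [ht] using hcoef.2

theorem span_pair_le_span_pair_swap_add_smul (c : K) :
    Submodule.span K {v, w} ≤ Submodule.span K {w, v + c • w} := by
  rw [Submodule.span_le, Set.insert_subset_iff, Set.singleton_subset_iff]
  refine ⟨Submodule.mem_span_pair.mpr ⟨-c, 1, by module⟩, Submodule.subset_span (by simp)⟩

theorem exists_subset_range_lineChart [Infinite K] (h : LinearIndependent K ![v, w])
    {S : Set (ℙ K V)} (hS : S.Finite) (hSvw : ∀ p ∈ S, p.rep ∈ Submodule.span K {v, w}) :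
    ∃ (v' w' : V) (h' : LinearIndependent K ![v', w']), S ⊆ Set.range (lineChart h') := by
  -- `[v + c • w] ∉ S` becomes the one point missed by the new chart
  obtain ⟨c, hc⟩ := (hS.preimage (lineChart_injective h).injOn).exists_notMem
  refine ⟨w, v + c • w, h.pair_swap_add_smul c, fun p hp => mem_range_lineChart _ ?_ ?_⟩
  · exact span_pair_le_span_pair_swap_add_smul c (hSvw p hp)
  · intro a ha
    have hpc : p = lineChart h c := by
      rw [← p.mk_rep]
      exact (Projectivization.mk_eq_mk_iff' K _ _ _ _).mpr ⟨a, ha⟩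
    exact hc (show lineChart h c ∈ S from hpc ▸ hp)

theorem Submodule.exists_linearIndependent_pair_span_eq {W : Submodule K V}
    (hW : Module.finrank K W = 2) :
    ∃ v w : V, LinearIndependent K ![v, w] ∧ Submodule.span K {v, w} = W := by
  have : Module.Finite K W := Module.finite_of_finrank_eq_succ hW
  let b := Module.finBasisOfFinrankEq K W hW
  have hb : W.subtype ∘ b = ![(b 0 : V), b 1] := by
    funext i; fin_cases i <;> rfl
  refine ⟨b 0, b 1, hb ▸ b.linearIndependent.map' _ W.ker_subtype, ?_⟩
  conv_rhs => rw [← W.map_subtype_top, ← b.span_eq]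
  rw [Submodule.map_span, ← Set.range_comp, hb, Matrix.range_cons_cons_empty]

end ProjectiveLine

namespace MvPolynomial.IsHomogeneous

variable {σ K : Type*} [Field K] {f : MvPolynomial σ K} {m : ℕ}

theorem eval_mk_rep_eq_zero_iff (hf : f.IsHomogeneous m) {x : σ → K} (hx : x ≠ 0) :
    eval (Projectivization.mk K x hx).rep f = 0 ↔ eval x f = 0 := by
  obtain ⟨a, ha⟩ := Projectivization.exists_smul_eq_mk_rep K x hx
  rw [← ha, Units.smul_def, hf.eval_smul, mul_eq_zero, or_iff_right (pow_ne_zero _ a.ne_zero)]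

theorem eval_lineChart_rep_eq_zero (hf : f.IsHomogeneous m) {v w : σ → K}
    (h : LinearIndependent K ![v, w]) {ι : Type*} [Fintype ι] {t : ι → K}
    (ht : Function.Injective t) (hm : m < Fintype.card ι)
    (hzero : ∀ i, eval (lineChart h (t i)).rep f = 0) (s : K) :
    eval (lineChart h s).rep f = 0 := by
  have hline : f.restrictLine v w = 0 := by
    refine Polynomial.eq_zero_of_natDegree_lt_card_of_eval_eq_zero _ ht (fun i => ?_)
      ((f.natDegree_restrictLine_le v w).trans hf.totalDegree_le |>.trans_lt hm)
    rw [eval_restrictLine, ← hf.eval_mk_rep_eq_zero_iff]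
    exact hzero i
  rw [lineChart, hf.eval_mk_rep_eq_zero_iff, ← eval_restrictLine, hline, Polynomial.eval_zero]

end MvPolynomial.IsHomogeneous

theorem no_collinear_points_in_eigenscheme_general (n d : ℕ) (hd : 2 ≤ d)
    (g : Fin (n + 1) → MvPolynomial (Fin (n + 1)) ℂ)
    (hg : ∀ i, (g i).IsHomogeneous (d - 1))
    (hfin : Set.Finite {p : Projectivization ℂ (Fin (n + 1) → ℂ) |
      ∀ i j : Fin (n + 1), eval p.rep (X i * g j - X j * g i) = 0}) :
    ∀ S : Finset (Projectivization ℂ (Fin (n + 1) → ℂ)),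
      (↑S : Set (Projectivization ℂ (Fin (n + 1) → ℂ))) ⊆
        {p : Projectivization ℂ (Fin (n + 1) → ℂ) |
          ∀ i j : Fin (n + 1), eval p.rep (X i * g j - X j * g i) = 0} →
      S.card = d + 1 →
      ¬ ∃ W : Submodule ℂ (Fin (n + 1) → ℂ), Module.finrank ℂ W = 2 ∧
          ∀ p ∈ S, Projectivization.submodule p ≤ W := by
  intro S hSE hcard ⟨W, hW, hSW⟩
  have hminor (i j : Fin (n + 1)) : (X i * g j - X j * g i).IsHomogeneous d := by
    have hdeg : 1 + (d - 1) = d := by omega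
    exact hdeg ▸ ((isHomogeneous_X ℂ i).mul (hg j)).sub ((isHomogeneous_X ℂ j).mul (hg i))
  obtain ⟨v₀, w₀, h₀, hspan⟩ := W.exists_linearIndependent_pair_span_eq hW
  obtain ⟨v, w, h, hcover⟩ := exists_subset_range_lineChart h₀ S.finite_toSet fun p hp =>
    hspan ▸ hSW p hp (p.submodule_eq ▸ Submodule.mem_span_singleton_self p.rep)
  choose t ht using fun p : S => hcover p.2
  have ht_inj : Function.Injective t := fun p q hpq => Subtype.ext (by rw [← ht p, ← ht q, hpq])
  refine (Set.infinite_range_of_injective (lineChart_injective h)).mono ?_ hfin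
  exact Set.range_subset_iff.mpr fun s i j => (hminor i j).eval_lineChart_rep_eq_zero h ht_inj
    (by simp [hcard]) (fun p => ht p ▸ hSE p.2 i j) s

theorem no_collinear_points_in_eigenscheme (n d : ℕ) (hn : 2 ≤ n) (hd : 2 ≤ d)
    (g : Fin (n + 1) → MvPolynomial (Fin (n + 1)) ℂ)
    (hg : ∀ i, (g i).IsHomogeneous (d - 1))
    (hfin : Set.Finite {p : Projectivization ℂ (Fin (n + 1) → ℂ) |
      ∀ i j : Fin (n + 1), eval p.rep (X i * g j - X j * g i) = 0}) :
    ∀ S : Finset (Projectivization ℂ (Fin (n + 1) → ℂ)),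
      (↑S : Set (Projectivization ℂ (Fin (n + 1) → ℂ))) ⊆
        {p : Projectivization ℂ (Fin (n + 1) → ℂ) |
          ∀ i j : Fin (n + 1), eval p.rep (X i * g j - X j * g i) = 0} →
      S.card = d + 1 →
      ¬ ∃ W : Submodule ℂ (Fin (n + 1) → ℂ), Module.finrank ℂ W = 2 ∧
          ∀ p ∈ S, Projectivization.submodule p ≤ W :=
  no_collinear_points_in_eigenscheme_general n d hd g hg hfin
end
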